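/- Let n >= 1 and A a subset of A_{2n}. Then A is balanced if and only if for every a in S^{2n-1}, the family {U(a) : U in A} is a finite unit tight frame for the tangent space T_a S^{2n-1}. -/

import Mathlib

open Finset RealInnerProductSpace

/-- The admissibility condition defining the set `A_{2n}`. -/
def Adm (n : ℕ) (U : (Fin (2*n) → ℤˣ) × (Fin (2*n) → Fin (2*n))) : Prop :=
  (∀ i, U.1 i = - U.1 (U.2 i)) ∧ (∀ i, U.2 (U.2 i) = i)

/-- A subset `A ⊆ A_{2n}` is balanced. -/
def IsBalanced (n : ℕ) (A : Finset ((Fin (2*n) → ℤˣ) × (Fin (2*n) → Fin (2*n)))) : Prop :=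
  (∀ p q : Fin (2*n), p ≠ q →
    ((A.filter (fun U => U.2 p = q)).card : ℝ) = A.card / (2*(n:ℝ) - 1)) ∧
  (∀ p q r s : Fin (2*n), p ≠ q → p ≠ r → p ≠ s → q ≠ r → q ≠ s → r ≠ s →
    (A.filter (fun U => U.1 p * U.1 q = -1 ∧
        (U.2 r = p ∧ U.2 s = q ∨ U.2 r = q ∧ U.2 s = p))).card =
    (A.filter (fun U => U.1 p * U.1 q = 1 ∧
        (U.2 r = p ∧ U.2 s = q ∨ U.2 r = q ∧ U.2 s = p))).card)

/-- The operator `U_{(ε,k)} : ℝ^{2n} → ℝ^{2n}`, `a ↦ (ε_{k_i} a_{k_i})_i`. -/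
def Uact (n : ℕ) (U : (Fin (2*n) → ℤˣ) × (Fin (2*n) → Fin (2*n)))
    (a : EuclideanSpace ℝ (Fin (2*n))) : EuclideanSpace ℝ (Fin (2*n)) :=
  WithLp.toLp 2 (fun i => ((U.1 (U.2 i) : ℤ) : ℝ) * a (U.2 i))

/-!
Write `T(a) = ∑_{U ∈ A} (U a)(U a)ᵀ` for the matrix of the frame operator of `{U a : U ∈ A}`.
Each `U a` is a unit vector orthogonal to `a`, since `k` is a fixed-point-free involution and
`ε_{k_i} = -ε_i`, and the family is a tight frame for `a^⊥` with bound `C` iff `T(a)` acts as `C`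
on `a^⊥`.

On the diagonal `T_ii(a) = ∑_q #{k_i = q} a_q²`, which balance (i) turns into `C (1 - a_i²)` with
`C = #A / (2n - 1)`. Off the diagonal `2 T_rs(a) = ∑_{p,q} a_p a_q σ_pq`, where `σ_pq` is the
signed count `∑ ε_p ε_q` over the `U` with `{k_r, k_s} = {p, q}`; balance (ii) says exactly that
`σ_pq = 0` for `p, q, r, s` pairwise distinct, and the remaining terms come from `k_r = s` and add
up to `-C a_r a_s`. Hence `T(a) = C (I - a aᵀ)`.

Conversely the frame identity forces `T_rs(a) = C δ_rs` whenever `a_r = 0`. At `a = e_q` this says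
that `#{k_p = q}` does not depend on `p ≠ q`, which gives (i) by counting `A` along `k_q`; at
`a = (e_p + e_q) / √2` it says `σ_pq = 0`, which is (ii).
-/

lemma Int.cast_units_mul_self {R : Type*} [Ring R] (u : ℤˣ) :
    ((u : ℤ) : R) * ((u : ℤ) : R) = 1 := by
  rw [← Int.cast_mul, ← Units.val_mul, Int.units_mul_self]; simp

lemma sum_filter_cast_units_eq_card_sub_card {α R : Type*} [Ring R] (B : Finset α)
    (P : α → Prop) [DecidablePred P] (f : α → ℤˣ) :
    ∑ x ∈ B with P x, ((f x : ℤ) : R) =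
      (#{x ∈ B | f x = 1 ∧ P x} : R) - #{x ∈ B | f x = -1 ∧ P x} := by
  simp only [Finset.sum_filter, Finset.card_filter, Nat.cast_sum, Nat.cast_ite, Nat.cast_one,
    Nat.cast_zero, ← Finset.sum_sub_distrib]
  refine Finset.sum_congr rfl fun x _ => ?_
  rcases Int.units_eq_one_or (f x) with h | h <;> by_cases hP : P x <;> simp [h, hP]

lemma sum_sum_ite_unordered_pair {ι M : Type*} [Fintype ι] [DecidableEq ι] [AddCommMonoid M]
    {x y : ι} (hxy : x ≠ y) (h : ι → ι → M) :
    ∑ p, ∑ q, (if x = p ∧ y = q ∨ x = q ∧ y = p then h p q else 0) = h x y + h y x := by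
  have hsplit : ∀ p q, (if x = p ∧ y = q ∨ x = q ∧ y = p then h p q else 0) =
      (if x = p ∧ y = q then h p q else 0) + (if y = p ∧ x = q then h p q else 0) := by
    rintro p q
    split_ifs <;> simp_all
  simp [hsplit, Finset.sum_add_distrib, ite_and]

lemma EuclideanSpace.real_inner_eq_sum {ι : Type*} [Fintype ι] (x y : EuclideanSpace ℝ ι) :
    ⟪x, y⟫ = ∑ i, x i * y i := by
  simp [PiLp.inner_apply, mul_comm]

namespace Adm

variable {n : ℕ} {U : (Fin (2*n) → ℤˣ) × (Fin (2*n) → Fin (2*n))}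

lemma involutive (hU : Adm n U) : Function.Involutive U.2 := hU.2

lemma apply_ne (hU : Adm n U) (i : Fin (2*n)) : U.2 i ≠ i := by
  intro h
  have h1 : ((U.1 i : ℤˣ) : ℤ) = -(U.1 i : ℤ) := by
    simpa [h] using congrArg Units.val (hU.1 i)
  have := Units.ne_zero (U.1 i)
  omega

lemma apply_eq_comm (hU : Adm n U) {i j : Fin (2*n)} : U.2 i = j ↔ U.2 j = i :=
  ⟨fun h => h ▸ hU.2 i, fun h => h ▸ hU.2 j⟩

lemma sign_apply_mul_sign (hU : Adm n U) (i : Fin (2*n)) :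
    ((U.1 (U.2 i) : ℤ) : ℝ) * ((U.1 i : ℤ) : ℝ) = -1 := by
  rw [hU.1 i, Units.val_neg, Int.cast_neg, mul_neg, Int.cast_units_mul_self]

end Adm

lemma Uact_apply {n : ℕ} (U : (Fin (2*n) → ℤˣ) × (Fin (2*n) → Fin (2*n)))
    (a : EuclideanSpace ℝ (Fin (2*n))) (i : Fin (2*n)) :
    Uact n U a i = ((U.1 (U.2 i) : ℤ) : ℝ) * a (U.2 i) := rfl

section Uact

variable {n : ℕ} {U : (Fin (2*n) → ℤˣ) × (Fin (2*n) → Fin (2*n))}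

lemma norm_Uact (hU : Adm n U) (a : EuclideanSpace ℝ (Fin (2*n))) : ‖Uact n U a‖ = ‖a‖ := by
  have hsign (i) : ‖((U.1 i : ℤ) : ℝ)‖ = 1 := by
    rcases Int.units_eq_one_or (U.1 i) with h | h <;> simp [h]
  simp only [EuclideanSpace.norm_eq, Uact_apply, norm_mul, hsign, one_mul]
  congr 1
  exact Equiv.sum_comp (hU.involutive.toPerm _) (fun i => ‖a i‖ ^ 2)

lemma inner_Uact_self (hU : Adm n U) (a : EuclideanSpace ℝ (Fin (2*n))) :
    ⟪Uact n U a, a⟫ = 0 := by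
  -- reindexing by the involution `k` changes the sign of every term
  have hS : ∑ i, ((U.1 (U.2 i) : ℤ) : ℝ) * a (U.2 i) * a i =
      -∑ i, ((U.1 (U.2 i) : ℤ) : ℝ) * a (U.2 i) * a i := by
    conv_lhs => rw [← Equiv.sum_comp (hU.involutive.toPerm _)]
    rw [← Finset.sum_neg_distrib]
    refine Finset.sum_congr rfl fun i _ => ?_
    simp only [Function.Involutive.coe_toPerm, hU.2 i, hU.1 i, Units.val_neg, Int.cast_neg]
    ring
  rw [EuclideanSpace.real_inner_eq_sum]
  exact self_eq_neg.mp hS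

end Uact

section Frame

variable {n : ℕ} (A : Finset ((Fin (2*n) → ℤˣ) × (Fin (2*n) → Fin (2*n))))

def frameMatrix (a : EuclideanSpace ℝ (Fin (2*n))) (i j : Fin (2*n)) : ℝ :=
  ∑ U ∈ A, Uact n U a i * Uact n U a j

def pairSign (p q r s : Fin (2*n)) : ℝ :=
  ∑ U ∈ A with (U.2 r = p ∧ U.2 s = q ∨ U.2 r = q ∧ U.2 s = p), (((U.1 p * U.1 q : ℤˣ) : ℤ) : ℝ)

def IsTightFrameAt (a : EuclideanSpace ℝ (Fin (2*n))) : Prop :=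
  ∃ C : ℝ, C > 0 ∧ ∀ x : EuclideanSpace ℝ (Fin (2*n)), ⟪x, a⟫ = 0 →
    x = C⁻¹ • ∑ U ∈ A, ⟪x, Uact n U a⟫ • Uact n U a

lemma frameOperator_apply (a x : EuclideanSpace ℝ (Fin (2*n))) (j : Fin (2*n)) :
    (∑ U ∈ A, ⟪x, Uact n U a⟫ • Uact n U a) j = ∑ i, x i * frameMatrix A a i j := by
  simp only [frameMatrix, WithLp.ofLp_sum, Finset.sum_apply, WithLp.ofLp_smul, Pi.smul_apply,
    smul_eq_mul, EuclideanSpace.real_inner_eq_sum, Finset.sum_mul, Finset.mul_sum]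
  rw [Finset.sum_comm]
  exact Finset.sum_congr rfl fun i _ => Finset.sum_congr rfl fun U _ => by ring

lemma frameMatrix_self (a : EuclideanSpace ℝ (Fin (2*n))) (i : Fin (2*n)) :
    frameMatrix A a i i = ∑ q, (#{U ∈ A | U.2 i = q} : ℝ) * (a q * a q) := by
  simp only [← nsmul_eq_mul, ← Finset.sum_const]
  rw [Finset.sum_fiberwise' A (fun U => U.2 i) (fun q => a q * a q)]
  refine Finset.sum_congr rfl fun U _ => ?_
  rw [Uact_apply, mul_mul_mul_comm, Int.cast_units_mul_self, one_mul]

lemma pairSign_comm (p q r s : Fin (2*n)) : pairSign A p q r s = pairSign A q p r s := by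
  unfold pairSign
  simp only [or_comm, mul_comm]

variable {A}

lemma two_mul_frameMatrix (hA : ∀ U ∈ A, Adm n U) (a : EuclideanSpace ℝ (Fin (2*n)))
    {r s : Fin (2*n)} (hrs : r ≠ s) :
    2 * frameMatrix A a r s = ∑ p, ∑ q, a p * a q * pairSign A p q r s := by
  -- `U` is counted once for `(p, q) = (k_r, k_s)` and once for `(k_s, k_r)`
  have hU (U) (hU : U ∈ A) : 2 * (Uact n U a r * Uact n U a s) =
      ∑ p, ∑ q, if U.2 r = p ∧ U.2 s = q ∨ U.2 r = q ∧ U.2 s = p then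
        a p * a q * (((U.1 p * U.1 q : ℤˣ) : ℤ) : ℝ) else 0 := by
    rw [sum_sum_ite_unordered_pair ((hA U hU).involutive.injective.ne hrs)]
    simp only [Uact_apply, Units.val_mul, Int.cast_mul]
    ring
  simp only [frameMatrix, Finset.mul_sum, pairSign, Finset.sum_filter]
  rw [Finset.sum_congr rfl hU, Finset.sum_comm]
  exact Finset.sum_congr rfl fun p _ => (Finset.sum_comm).trans
    (Finset.sum_congr rfl fun q _ => Finset.sum_congr rfl fun U _ => by split_ifs <;> simp)

lemma pairSign_eq_zero_iff {p q r s : Fin (2*n)} :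
    pairSign A p q r s = 0 ↔
      #{U ∈ A | U.1 p * U.1 q = -1 ∧ (U.2 r = p ∧ U.2 s = q ∨ U.2 r = q ∧ U.2 s = p)} =
      #{U ∈ A | U.1 p * U.1 q = 1 ∧ (U.2 r = p ∧ U.2 s = q ∨ U.2 r = q ∧ U.2 s = p)} := by
  rw [pairSign, sum_filter_cast_units_eq_card_sub_card, sub_eq_zero, Nat.cast_inj, eq_comm]

lemma pairSign_of_not_pairwise_distinct (hA : ∀ U ∈ A, Adm n U) {p q r s : Fin (2*n)}
    (hrs : r ≠ s) (h : p = q ∨ p = r ∨ p = s ∨ q = r ∨ q = s) :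
    pairSign A p q r s = -#{U ∈ A | U.2 r = s} *
      ((if p = r ∧ q = s then 1 else 0) + (if p = s ∧ q = r then 1 else 0)) := by
  simp only [pairSign, Finset.sum_filter, Finset.card_filter, Nat.cast_sum, Nat.cast_ite,
    Nat.cast_one, Nat.cast_zero, ← Finset.sum_neg_distrib, Finset.sum_mul]
  refine Finset.sum_congr rfl fun U hU => ?_
  -- if `{k_r, k_s} = {p, q}` meets `{r, s}`, the involution forces `k_r = s` and `{p, q} = {r, s}`
  have hadm := hA U hU
  have hinv := hadm.2
  have hne := hadm.apply_ne
  have hsign := hadm.sign_apply_mul_sign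
  push_cast
  split_ifs <;> grind

lemma card_filter_apply_eq_of_isBalanced (hA : ∀ U ∈ A, Adm n U) (hbal : IsBalanced n A)
    (r q : Fin (2*n)) :
    (#{U ∈ A | U.2 r = q} : ℝ) = if r = q then 0 else (#A : ℝ) / (2 * n - 1) := by
  split_ifs with h
  · subst h
    simp [Finset.filter_eq_empty_iff.mpr fun U hU => (hA U hU).apply_ne r]
  · exact hbal.1 r q h

lemma pairSign_eq_of_isBalanced (hA : ∀ U ∈ A, Adm n U) (hbal : IsBalanced n A)
    {p q r s : Fin (2*n)} (hrs : r ≠ s) :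
    pairSign A p q r s = -((#A : ℝ) / (2 * n - 1)) *
      ((if p = r ∧ q = s then 1 else 0) + (if p = s ∧ q = r then 1 else 0)) := by
  by_cases h : p = q ∨ p = r ∨ p = s ∨ q = r ∨ q = s
  · rw [pairSign_of_not_pairwise_distinct hA hrs h,
      card_filter_apply_eq_of_isBalanced hA hbal, if_neg hrs]
  · simp only [not_or] at h
    obtain ⟨hpq, hpr, hps, hqr, hqs⟩ := h
    rw [pairSign_eq_zero_iff.mpr (hbal.2 p q r s hpq hpr hps hqr hqs hrs)]
    simp [hpr, hps]

lemma frameMatrix_eq_of_isBalanced (hA : ∀ U ∈ A, Adm n U) (hbal : IsBalanced n A)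
    {a : EuclideanSpace ℝ (Fin (2*n))} (ha : ‖a‖ = 1) (r s : Fin (2*n)) :
    frameMatrix A a r s = (#A : ℝ) / (2 * n - 1) * ((if r = s then 1 else 0) - a r * a s) := by
  rcases eq_or_ne r s with rfl | hrs
  · rw [if_pos rfl]
    have ha' : ∑ q, a q * a q = 1 := by
      rw [← EuclideanSpace.real_inner_eq_sum, real_inner_self_eq_norm_sq, ha, one_pow]
    have hsplit (q : Fin (2*n)) : (if r = q then 0 else (#A : ℝ) / (2 * n - 1)) * (a q * a q) =
        (#A : ℝ) / (2 * n - 1) * (a q * a q) -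
          if r = q then (#A : ℝ) / (2 * n - 1) * (a q * a q) else 0 := by
      split_ifs <;> ring
    simp only [frameMatrix_self, card_filter_apply_eq_of_isBalanced hA hbal, hsplit,
      Finset.sum_sub_distrib, ← Finset.mul_sum, ha', Finset.sum_ite_eq, Finset.mem_univ, if_true]
    ring
  · have h2 := two_mul_frameMatrix hA a hrs
    simp only [pairSign_eq_of_isBalanced hA hbal hrs, ite_and, mul_add, mul_ite, mul_one,
      mul_zero, mul_neg, Finset.sum_add_distrib, Finset.sum_ite_irrel, Finset.sum_ite_eq',
      Finset.mem_univ, if_true, Finset.sum_const_zero] at h2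
    rw [if_neg hrs]
    linarith

lemma frameOperator_eq_smul {a x : EuclideanSpace ℝ (Fin (2*n))} {C : ℝ}
    (hT : ∀ i j, frameMatrix A a i j = C * ((if i = j then 1 else 0) - a i * a j))
    (hx : ⟪x, a⟫ = 0) :
    ∑ U ∈ A, ⟪x, Uact n U a⟫ • Uact n U a = C • x := by
  rw [EuclideanSpace.real_inner_eq_sum] at hx
  ext j
  have hsplit (i : Fin (2*n)) : x i * (C * ((if i = j then 1 else 0) - a i * a j)) =
      (if i = j then C * x i else 0) - C * a j * (x i * a i) := by
    split_ifs <;> ring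
  simp only [frameOperator_apply, hT, hsplit, Finset.sum_sub_distrib, Finset.sum_ite_eq',
    Finset.mem_univ, if_true, ← Finset.mul_sum, hx, mul_zero, sub_zero, WithLp.ofLp_smul,
    Pi.smul_apply, smul_eq_mul]

lemma isTightFrameAt_of_isBalanced (hA : ∀ U ∈ A, Adm n U) (hA0 : A.Nonempty)
    (hbal : IsBalanced n A) {a : EuclideanSpace ℝ (Fin (2*n))} (ha : ‖a‖ = 1) :
    IsTightFrameAt A a := by
  -- a unit vector exists only if `2 * n ≠ 0`
  have hn : (1 : ℝ) ≤ n := by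
    obtain ⟨i⟩ : Nonempty (Fin (2*n)) := by
      by_contra h
      rw [not_nonempty_iff] at h
      simp [Subsingleton.elim a 0] at ha
    exact_mod_cast (show 1 ≤ n by have := i.pos; omega)
  have hC : (0 : ℝ) < #A / (2 * n - 1) := div_pos (by exact_mod_cast hA0.card_pos) (by linarith)
  refine ⟨_, hC, fun x hx => ?_⟩
  rw [frameOperator_eq_smul (frameMatrix_eq_of_isBalanced hA hbal ha) hx, inv_smul_smul₀ hC.ne']

lemma frameMatrix_eq_of_isTightFrameAt {a : EuclideanSpace ℝ (Fin (2*n))} {C : ℝ} (hC : C ≠ 0)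
    (hfr : ∀ x : EuclideanSpace ℝ (Fin (2*n)), ⟪x, a⟫ = 0 →
      x = C⁻¹ • ∑ U ∈ A, ⟪x, Uact n U a⟫ • Uact n U a)
    {r : Fin (2*n)} (hr : a r = 0) (s : Fin (2*n)) :
    frameMatrix A a r s = if r = s then C else 0 := by
  have hs := congrArg (fun x => x s)
    (hfr (EuclideanSpace.single r 1) (by simp [EuclideanSpace.inner_single_left, hr]))
  simp only [WithLp.ofLp_smul, Pi.smul_apply, smul_eq_mul, frameOperator_apply,
    PiLp.single_apply, ite_mul, one_mul, zero_mul, Finset.sum_ite_eq', Finset.mem_univ,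
    if_true] at hs
  rw [eq_inv_mul_iff_mul_eq₀ hC] at hs
  rw [← hs]
  rcases eq_or_ne r s with rfl | hrs
  · simp
  · simp [hrs, hrs.symm]

lemma card_filter_apply_eq_frameMatrix_single (p q : Fin (2*n)) :
    (#{U ∈ A | U.2 p = q} : ℝ) = frameMatrix A (EuclideanSpace.single q 1) p p := by
  simp [frameMatrix_self, PiLp.single_apply]

lemma card_eq_mul_of_card_filter_apply_eq (hA : ∀ U ∈ A, Adm n U) {q : Fin (2*n)} {c : ℝ}
    (hc : ∀ p ≠ q, (#{U ∈ A | U.2 p = q} : ℝ) = c) :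
    (#A : ℝ) = (2 * n - 1) * c := by
  have hfiber : #A = ∑ p ∈ univ.erase q, #{U ∈ A | U.2 q = p} :=
    Finset.card_eq_sum_card_fiberwise fun U hU => by simp [(hA U hU).apply_ne q]
  have hcard : ((univ.erase q).card : ℝ) = 2 * n - 1 := by
    rw [Finset.card_erase_of_mem (mem_univ q), Finset.card_univ, Fintype.card_fin,
      Nat.cast_sub (by have := q.pos; omega)]
    push_cast; ring
  rw [hfiber, Nat.cast_sum, ← hcard, ← nsmul_eq_mul, ← Finset.sum_const]
  refine Finset.sum_congr rfl fun p hp => ?_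
  rw [← hc p (Finset.ne_of_mem_erase hp)]
  congr 2
  exact Finset.filter_congr fun U hU => (hA U hU).apply_eq_comm

lemma card_filter_apply_eq_of_isTightFrameAt (hA : ∀ U ∈ A, Adm n U)
    (hfr : ∀ a : EuclideanSpace ℝ (Fin (2*n)), ‖a‖ = 1 → IsTightFrameAt A a)
    {p q : Fin (2*n)} (hpq : p ≠ q) :
    (#{U ∈ A | U.2 p = q} : ℝ) = #A / (2 * n - 1) := by
  obtain ⟨C, hC, hfrC⟩ := hfr (EuclideanSpace.single q 1) (by simp)
  have hc (p' : Fin (2*n)) (hp' : p' ≠ q) : (#{U ∈ A | U.2 p' = q} : ℝ) = C := by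
    rw [card_filter_apply_eq_frameMatrix_single,
      frameMatrix_eq_of_isTightFrameAt hC.ne' hfrC (by simp [hp']), if_pos rfl]
  have hn : (1 : ℝ) ≤ n := by exact_mod_cast (show 1 ≤ n by have := p.pos; omega)
  rw [card_eq_mul_of_card_filter_apply_eq hA hc, hc p hpq, mul_div_cancel_left₀]
  linarith

lemma pairSign_eq_zero_of_isTightFrameAt (hA : ∀ U ∈ A, Adm n U)
    (hfr : ∀ a : EuclideanSpace ℝ (Fin (2*n)), ‖a‖ = 1 → IsTightFrameAt A a)
    {p q r s : Fin (2*n)} (hpq : p ≠ q) (hpr : p ≠ r) (hps : p ≠ s) (hqr : q ≠ r) (hqs : q ≠ s)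
    (hrs : r ≠ s) :
    pairSign A p q r s = 0 := by
  set c : ℝ := (√2)⁻¹
  set a : EuclideanSpace ℝ (Fin (2*n)) :=
    c • (EuclideanSpace.single p 1 + EuclideanSpace.single q 1)
  have ha : ‖a‖ = 1 := by
    have hsq : ‖EuclideanSpace.single p (1 : ℝ) + EuclideanSpace.single q 1‖ ^ 2 = 2 := by
      rw [norm_add_sq_real]
      simp [EuclideanSpace.inner_single_left, hpq]
      norm_num
    rw [norm_smul, ← Real.sqrt_sq (norm_nonneg (_ + _)), hsq]
    simp [c, abs_of_pos]
  obtain ⟨C, hC, hfrC⟩ := hfr a ha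
  have hT := frameMatrix_eq_of_isTightFrameAt hC.ne' hfrC (r := r)
    (by simp [a, hpr.symm, hqr.symm]) s
  have hdiag (p' : Fin (2*n)) (hp'r : p' ≠ r) (hp's : p' ≠ s) : pairSign A p' p' r s = 0 := by
    rw [pairSign_of_not_pairwise_distinct hA hrs (Or.inl rfl)]
    simp [hp'r, hp's]
  have h2 := two_mul_frameMatrix hA a hrs
  rw [hT, if_neg hrs, mul_zero] at h2
  simp only [a, smul_add, PiLp.add_apply, PiLp.smul_apply, PiLp.single_apply, smul_eq_mul,
    mul_ite, mul_one, mul_zero, mul_add, add_mul, ite_mul, zero_mul, Finset.sum_add_distrib,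
    Finset.sum_ite_eq', Finset.mem_univ, if_true, hdiag p hpr hps, hdiag q hqr hqs,
    pairSign_comm A q p, zero_add, add_zero] at h2
  -- only `(p, q)` and `(q, p)` contribute to `2 T_rs(a)`, each with weight `c * c = 1 / 2`
  have : c * c * pairSign A p q r s = 0 := by linarith
  simpa [c] using this

lemma isBalanced_of_isTightFrameAt (hA : ∀ U ∈ A, Adm n U)
    (hfr : ∀ a : EuclideanSpace ℝ (Fin (2*n)), ‖a‖ = 1 → IsTightFrameAt A a) :
    IsBalanced n A :=
  ⟨fun _ _ hpq => card_filter_apply_eq_of_isTightFrameAt hA hfr hpq,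
    fun _ _ _ _ hpq hpr hps hqr hqs hrs => pairSign_eq_zero_iff.mp
      (pairSign_eq_zero_of_isTightFrameAt hA hfr hpq hpr hps hqr hqs hrs)⟩

end Frame

theorem balanced_iff_moving_funtf_general (n : ℕ)
    (A : Finset ((Fin (2*n) → ℤˣ) × (Fin (2*n) → Fin (2*n))))
    (hA : ∀ U ∈ A, Adm n U) (hA0 : A.Nonempty) :
    IsBalanced n A ↔
    (∀ a : EuclideanSpace ℝ (Fin (2*n)), ‖a‖ = 1 →
      (∀ U ∈ A, ‖Uact n U a‖ = 1 ∧ ⟪Uact n U a, a⟫ = 0) ∧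
      (∃ C : ℝ, C > 0 ∧ ∀ x : EuclideanSpace ℝ (Fin (2*n)), ⟪x, a⟫ = 0 →
        x = C⁻¹ • ∑ U ∈ A, ⟪x, Uact n U a⟫ • Uact n U a)) := by
  constructor
  · intro hbal a ha
    exact ⟨fun U hU => ⟨(norm_Uact (hA U hU) a).trans ha, inner_Uact_self (hA U hU) a⟩,
      isTightFrameAt_of_isBalanced hA hA0 hbal ha⟩
  · exact fun h => isBalanced_of_isTightFrameAt hA fun a ha => (h a ha).2

theorem balanced_iff_moving_funtf (n : ℕ) (hn : 1 ≤ n)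
    (A : Finset ((Fin (2*n) → ℤˣ) × (Fin (2*n) → Fin (2*n))))
    (hA : ∀ U ∈ A, Adm n U) (hA0 : A.Nonempty) :
    IsBalanced n A ↔
    (∀ a : EuclideanSpace ℝ (Fin (2*n)), ‖a‖ = 1 →
      (∀ U ∈ A, ‖Uact n U a‖ = 1 ∧ ⟪Uact n U a, a⟫ = 0) ∧
      (∃ C : ℝ, C > 0 ∧ ∀ x : EuclideanSpace ℝ (Fin (2*n)), ⟪x, a⟫ = 0 →
        x = C⁻¹ • ∑ U ∈ A, ⟪x, Uact n U a⟫ • Uact n U a)) :=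
  balanced_iff_moving_funtf_general n A hA hA0
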